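/- arXiv:1910.14147 — 2 statements merged into one kernel-verified Lean document; each statement's English description precedes it below -/
import Mathlib

section
/- (Lemma 1 / Proposition, Finite phase I) Assume λ₁ < 0 and g⁽¹⁾ = gᵀv₁ ≠ 0. Let 0 < η < 1/β and let the plain gradient-descent iterates be defined by z_{t+1} = z_t − η(Hz_t + g) from the initialization z₀ = −α·g/‖g‖₂ where g ≠ 0, 0 < α < 1, and α·|gᵀHg| < ‖g‖₂³. If T₁ is an index such that ‖z_t‖₂ < 1 for all t ≤ T₁ and ‖z_{T₁+1}‖₂ ≥ 1, then T₁ ≤ [log(1/(η·|g⁽¹⁾|) − 1/(η·λ₁)) − log(−z₀⁽¹⁾/(η·g⁽¹⁾) − 1/(η·λ₁))] / log(1 − η·λ₁), where a⁽¹⁾ denotes aᵀv₁ for a vector a. -/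
open Matrix

/-- The Euclidean (`ℓ₂`) norm of a vector in `ℝⁿ`. -/
noncomputable def enorm {n : ℕ} (x : Fin n → ℝ) : ℝ := Real.sqrt (∑ i, x i ^ 2)

/-- `β` is the (Euclidean) operator norm of `H`: the least nonnegative constant `c`
with `‖Hx‖₂ ≤ c ‖x‖₂` for all `x`. -/
def IsOpNorm {n : ℕ} (H : Matrix (Fin n) (Fin n) ℝ) (β : ℝ) : Prop :=
  IsLeast {c : ℝ | 0 ≤ c ∧ ∀ x : Fin n → ℝ, _root_.enorm (H.mulVec x) ≤ c * _root_.enorm x} β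

/-!
Along the eigenvector `v₁` the gradient step decouples: `x_t = z_tᵀv₁` obeys the scalar affine
recursion `x_{t+1} = (1 - ηλ₁) x_t - η g⁽¹⁾`, whose fixed point is `-g⁽¹⁾/λ₁`. Since `λ₁ < 0`,
the distance to the fixed point grows geometrically by the factor `1 - ηλ₁ > 1`, while
`|x_t| ≤ ‖z_t‖ < 1` keeps it below `1 + |g⁽¹⁾/λ₁|` up to time `T₁`; taking logarithms bounds `T₁`.
-/

lemma abs_dotProduct_le_enorm_mul_enorm {n : ℕ} (x y : Fin n → ℝ) :
    |x ⬝ᵥ y| ≤ _root_.enorm x * _root_.enorm y := by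
  rw [_root_.enorm, _root_.enorm, ← Real.sqrt_mul (Finset.sum_nonneg fun i _ => sq_nonneg (x i))]
  exact Real.abs_le_sqrt (Finset.sum_mul_sq_le_sq_mul_sq _ _ _)

lemma Matrix.IsSymm.mulVec_dotProduct_of_mulVec_eq_smul {m R : Type*} [Fintype m] [CommRing R]
    {H : Matrix m m R} (hH : H.IsSymm) {μ : R} {v : m → R} (hv : H *ᵥ v = μ • v) (z : m → R) :
    H *ᵥ z ⬝ᵥ v = μ * (z ⬝ᵥ v) := by
  rw [dotProduct_comm, dotProduct_mulVec, ← mulVec_transpose, hH.eq, hv, smul_dotProduct,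
    smul_eq_mul, dotProduct_comm]

lemma Matrix.IsSymm.gradientStep_dotProduct_of_mulVec_eq_smul {m R : Type*} [Fintype m]
    [CommRing R] {H : Matrix m m R} (hH : H.IsSymm) {μ : R} {v : m → R} (hv : H *ᵥ v = μ • v)
    (z g : m → R) (η : R) :
    (z - η • (H *ᵥ z + g)) ⬝ᵥ v = (1 - η * μ) * (z ⬝ᵥ v) - η * (g ⬝ᵥ v) := by
  rw [sub_dotProduct, smul_dotProduct, add_dotProduct,
    hH.mulVec_dotProduct_of_mulVec_eq_smul hv, smul_eq_mul]
  ring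

lemma eq_pow_mul_of_succ_eq_mul {M : Type*} [Monoid M] {y : ℕ → M} {r : M}
    (h : ∀ t, y (t + 1) = r * y t) (t : ℕ) : y t = r ^ t * y 0 := by
  induction t with
  | zero => rw [pow_zero, one_mul]
  | succ t ih => rw [h, ih, pow_succ', mul_assoc]

lemma natCast_le_log_sub_log_div_log_of_pow_mul_le {r a b : ℝ} {T : ℕ} (hr : 1 < r) (hb : 0 < b)
    (h : r ^ T * b ≤ a) : (T : ℝ) ≤ (Real.log a - Real.log b) / Real.log r := by
  have hlog := Real.log_le_log (by positivity) h
  rw [Real.log_mul (by positivity) hb.ne', Real.log_pow] at hlog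
  rw [le_div_iff₀ (Real.log_pos hr)]
  linarith

theorem escape_time_le_of_affine_recursion {L G η : ℝ} {x : ℕ → ℝ} {T : ℕ}
    (hL : L < 0) (hG : G ≠ 0) (hη : 0 < η)
    (hx : ∀ t, x (t + 1) = (1 - η * L) * x t - η * G) (hx0 : x 0 ≠ -G / L) (hT : |x T| ≤ 1) :
    (T : ℝ) ≤
      (Real.log (1 / (η * |G|) - 1 / (η * L)) - Real.log (-x 0 / (η * G) - 1 / (η * L))) /
        Real.log (1 - η * L) := by
  have hr : 1 < 1 - η * L := by nlinarith
  have hL0 := hL.ne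
  have hclosed : x T + G / L = (1 - η * L) ^ T * (x 0 + G / L) :=
    eq_pow_mul_of_succ_eq_mul (y := fun t => x t + G / L)
      (fun t => by rw [hx]; field_simp; ring) T
  have hdist : (1 - η * L) ^ T * |x 0 + G / L| ≤ 1 + |G| / -L := by
    have := abs_add_le (x T) (G / L)
    rw [hclosed, abs_mul, abs_of_pos (by positivity), abs_div, abs_of_neg hL] at this
    linarith
  have hb : -x 0 / (η * G) - 1 / (η * L) = -(x 0 + G / L) / (η * G) := by
    field_simp
    ring
  have ha : 1 / (η * |G|) - 1 / (η * L) = (1 + |G| / -L) / (η * |G|) := by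
    field_simp
    ring
  have hxL : x 0 + G / L ≠ 0 := fun h => hx0 (by rw [neg_div]; linarith)
  -- `Real.log` ignores signs, so `x 0` may lie on either side of the fixed point.
  rw [← Real.log_abs (-x 0 / (η * G) - 1 / (η * L)), hb, ha, abs_div, abs_neg, abs_mul,
    abs_of_pos hη]
  refine natCast_le_log_sub_log_div_log_of_pow_mul_le hr (by positivity) ?_
  rw [← mul_div_assoc]
  gcongr

theorem finite_phaseI_iteration_bound_general {n : ℕ}
    (H : Matrix (Fin n) (Fin n) ℝ) (hH : H.IsSymm) (g : Fin n → ℝ)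
    (lam1 : ℝ) (v1 : Fin n → ℝ)
    (hv1_unit : _root_.enorm v1 = 1) (hv1_eig : H.mulVec v1 = lam1 • v1)
    (hlam1_neg : lam1 < 0) (hgv1 : g ⬝ᵥ v1 ≠ 0)
    (η : ℝ) (hη_pos : 0 < η)
    (α : ℝ) (hα_pos : 0 < α)
    (z : ℕ → Fin n → ℝ)
    (hz0 : z 0 = (-(α / _root_.enorm g)) • g)
    (hrec : ∀ s, z (s + 1) = z s - η • (H.mulVec (z s) + g))
    (T1 : ℕ)
    (hT1_in : ∀ t ≤ T1, _root_.enorm (z t) < 1) :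
    (T1 : ℝ) ≤
      (Real.log (1 / (η * |g ⬝ᵥ v1|) - 1 / (η * lam1)) -
        Real.log (-(z 0 ⬝ᵥ v1) / (η * (g ⬝ᵥ v1)) - 1 / (η * lam1))) /
      Real.log (1 - η * lam1) := by
  have hproj (t : ℕ) :
      z (t + 1) ⬝ᵥ v1 = (1 - η * lam1) * (z t ⬝ᵥ v1) - η * (g ⬝ᵥ v1) := by
    rw [hrec, hH.gradientStep_dotProduct_of_mulVec_eq_smul hv1_eig]
  have hz0_ne_fixed : z 0 ⬝ᵥ v1 ≠ -(g ⬝ᵥ v1) / lam1 := by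
    intro h
    rw [hz0, smul_dotProduct, smul_eq_mul, neg_mul, neg_div, neg_inj,
      div_eq_inv_mul (g ⬝ᵥ v1)] at h
    have hscale : 0 ≤ α / _root_.enorm g := div_nonneg hα_pos.le (Real.sqrt_nonneg _)
    linarith [mul_right_cancel₀ hgv1 h, inv_lt_zero.mpr hlam1_neg]
  have hT1 : |z T1 ⬝ᵥ v1| ≤ 1 := by
    have := abs_dotProduct_le_enorm_mul_enorm (z T1) v1
    rw [hv1_unit, mul_one] at this
    linarith [hT1_in T1 le_rfl]
  exact escape_time_le_of_affine_recursion (x := fun t => z t ⬝ᵥ v1) hlam1_neg hgv1 hη_pos hproj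
    hz0_ne_fixed hT1

/-- (Finite phase I.) In the easy case (`λ₁ < 0`, `g⁽¹⁾ = gᵀv₁ ≠ 0`), for plain gradient
descent `z_{t+1} = z_t − η (H z_t + g)` with `0 < η < 1/β`, initialized at
`z₀ = −α g/‖g‖` with `0 < α < 1`, `α |gᵀHg| < ‖g‖³`: if `T₁` satisfies `‖z_t‖₂ < 1` for
all `t ≤ T₁` and `‖z_{T₁+1}‖₂ ≥ 1`, then
`T₁ ≤ [log(1/(η|g⁽¹⁾|) − 1/(ηλ₁)) − log(−z₀⁽¹⁾/(ηg⁽¹⁾) − 1/(ηλ₁))] / log(1 − ηλ₁)`. -/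
theorem finite_phaseI_iteration_bound {n : ℕ}
    (H : Matrix (Fin n) (Fin n) ℝ) (hH : H.IsSymm) (g : Fin n → ℝ) (hg : g ≠ 0)
    (lam1 : ℝ) (v1 : Fin n → ℝ)
    (hv1_unit : _root_.enorm v1 = 1) (hv1_eig : H.mulVec v1 = lam1 • v1)
    (hlam1_min : ∀ (μ : ℝ) (w : Fin n → ℝ), w ≠ 0 → H.mulVec w = μ • w → lam1 ≤ μ)
    (hlam1_neg : lam1 < 0) (hgv1 : g ⬝ᵥ v1 ≠ 0)
    (β : ℝ) (hβ : IsOpNorm H β)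
    (η : ℝ) (hη_pos : 0 < η) (hη_lt : η < 1 / β)
    (α : ℝ) (hα_pos : 0 < α) (hα_lt : α < 1)
    (hα_g : α * |g ⬝ᵥ H.mulVec g| < (_root_.enorm g) ^ 3)
    (z : ℕ → Fin n → ℝ)
    (hz0 : z 0 = (-(α / _root_.enorm g)) • g)
    (hrec : ∀ s, z (s + 1) = z s - η • (H.mulVec (z s) + g))
    (T1 : ℕ)
    (hT1_in : ∀ t ≤ T1, _root_.enorm (z t) < 1)
    (hT1_out : 1 ≤ _root_.enorm (z (T1 + 1))) :
    (T1 : ℝ) ≤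
      (Real.log (1 / (η * |g ⬝ᵥ v1|) - 1 / (η * lam1)) -
        Real.log (-(z 0 ⬝ᵥ v1) / (η * (g ⬝ᵥ v1)) - 1 / (η * lam1))) /
      Real.log (1 - η * lam1) :=
  finite_phaseI_iteration_bound_general H hH g lam1 v1 hv1_unit hv1_eig hlam1_neg hgv1 η hη_pos α
    hα_pos z hz0 hrec T1 hT1_in
end

section
/- (One-step descent inequality) Let β be the operator norm of H, let 0 < η with η·β ≤ 1, and let z ∈ ℝⁿ satisfy zᵀ(Hz + g) ≤ 0 and zᵀH(Hz + g) ≥ β·zᵀ(Hz + g). Then the gradient step z' = z − η(Hz + g) satisfies z'ᵀ(Hz' + g) ≤ (1 − β·η)·zᵀ(Hz + g) − η·(1 − η·β)·‖Hz + g‖₂² ≤ 0. -/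
open Matrix

/-!
With `v = Hz + g`, the quadratic `z'ᵀ(Hz' + g)` at `z' = z − ηv` expands to
`zᵀv − η zᵀHv − η‖v‖² + η² vᵀHv`. The hypothesis on `zᵀHv` bounds the second term and
Cauchy–Schwarz with the operator norm gives `vᵀHv ≤ β‖v‖²` for the last one; the second
inequality is a sign count, as `1 − βη ≥ 0` and `zᵀv ≤ 0`.
-/

lemma enorm_sq_eq_dotProduct {n : ℕ} (x : Fin n → ℝ) : _root_.enorm x ^ 2 = x ⬝ᵥ x := by
  rw [_root_.enorm, Real.sq_sqrt (Finset.sum_nonneg fun i _ => sq_nonneg _)]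
  simp only [dotProduct, sq]

lemma dotProduct_le_enorm_mul_enorm {n : ℕ} (x y : Fin n → ℝ) :
    x ⬝ᵥ y ≤ _root_.enorm x * _root_.enorm y :=
  Real.sum_mul_le_sqrt_mul_sqrt Finset.univ x y

lemma dotProduct_mulVec_self_le {n : ℕ} {H : Matrix (Fin n) (Fin n) ℝ} {c : ℝ}
    {v : Fin n → ℝ} (hv : _root_.enorm (H *ᵥ v) ≤ c * _root_.enorm v) :
    v ⬝ᵥ H *ᵥ v ≤ c * _root_.enorm v ^ 2 :=
  calc v ⬝ᵥ H *ᵥ v ≤ _root_.enorm v * _root_.enorm (H *ᵥ v) := dotProduct_le_enorm_mul_enorm _ _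
    _ ≤ _root_.enorm v * (c * _root_.enorm v) :=
      mul_le_mul_of_nonneg_left hv (Real.sqrt_nonneg _)
    _ = c * _root_.enorm v ^ 2 := by ring

lemma sub_smul_dotProduct_mulVec_sub_smul_add {ι R : Type*} [Fintype ι] [CommRing R]
    (H : Matrix ι ι R) (g z v : ι → R) (η : R) :
    (z - η • v) ⬝ᵥ (H *ᵥ (z - η • v) + g) =
      z ⬝ᵥ (H *ᵥ z + g) - η * (z ⬝ᵥ H *ᵥ v) - η * (v ⬝ᵥ (H *ᵥ z + g)) +
        η ^ 2 * (v ⬝ᵥ H *ᵥ v) := by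
  simp only [mulVec_sub, mulVec_smul, sub_dotProduct, dotProduct_add, dotProduct_sub,
    smul_dotProduct, dotProduct_smul, smul_eq_mul]
  ring

theorem one_step_descent_inequality_general {n : ℕ}
    (H : Matrix (Fin n) (Fin n) ℝ) (g : Fin n → ℝ)
    (β : ℝ) (hβ : IsOpNorm H β)
    (η : ℝ) (hη_pos : 0 < η) (hηβ : η * β ≤ 1)
    (z : Fin n → ℝ)
    (hz1 : z ⬝ᵥ (H.mulVec z + g) ≤ 0)
    (hz2 : z ⬝ᵥ H.mulVec (H.mulVec z + g) ≥ β * (z ⬝ᵥ (H.mulVec z + g))) :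
    (z - η • (H.mulVec z + g)) ⬝ᵥ (H.mulVec (z - η • (H.mulVec z + g)) + g) ≤
        (1 - β * η) * (z ⬝ᵥ (H.mulVec z + g)) -
          η * (1 - η * β) * (_root_.enorm (H.mulVec z + g)) ^ 2 ∧
      (1 - β * η) * (z ⬝ᵥ (H.mulVec z + g)) -
          η * (1 - η * β) * (_root_.enorm (H.mulVec z + g)) ^ 2 ≤ 0 := by
  set v := H *ᵥ z + g
  have hvHv : v ⬝ᵥ H *ᵥ v ≤ β * _root_.enorm v ^ 2 := dotProduct_mulVec_self_le (hβ.1.2 v)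
  have hvv : v ⬝ᵥ v = _root_.enorm v ^ 2 := (enorm_sq_eq_dotProduct v).symm
  have hβη : 0 ≤ 1 - β * η := by linarith [mul_comm η β]
  constructor
  · rw [sub_smul_dotProduct_mulVec_sub_smul_add, hvv]
    linarith [mul_le_mul_of_nonneg_left hz2 hη_pos.le,
      mul_le_mul_of_nonneg_left hvHv (sq_nonneg η)]
  · have hdescent : 0 ≤ η * (1 - η * β) * _root_.enorm v ^ 2 := by
      rw [mul_comm η β]; positivity
    linarith [mul_nonpos_of_nonneg_of_nonpos hβη hz1]

/-- (One-step descent inequality.) If `zᵀ(Hz + g) ≤ 0` and `zᵀH(Hz + g) ≥ β zᵀ(Hz + g)`,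
then the gradient step `z' = z − η (Hz + g)` with `0 < η`, `ηβ ≤ 1` satisfies
`z'ᵀ(Hz' + g) ≤ (1 − βη) zᵀ(Hz + g) − η(1 − ηβ)‖Hz + g‖₂² ≤ 0`. -/
theorem one_step_descent_inequality {n : ℕ}
    (H : Matrix (Fin n) (Fin n) ℝ) (hH : H.IsSymm) (g : Fin n → ℝ)
    (β : ℝ) (hβ : IsOpNorm H β)
    (η : ℝ) (hη_pos : 0 < η) (hηβ : η * β ≤ 1)
    (z : Fin n → ℝ)
    (hz1 : z ⬝ᵥ (H.mulVec z + g) ≤ 0)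
    (hz2 : z ⬝ᵥ H.mulVec (H.mulVec z + g) ≥ β * (z ⬝ᵥ (H.mulVec z + g))) :
    (z - η • (H.mulVec z + g)) ⬝ᵥ (H.mulVec (z - η • (H.mulVec z + g)) + g) ≤
        (1 - β * η) * (z ⬝ᵥ (H.mulVec z + g)) -
          η * (1 - η * β) * (_root_.enorm (H.mulVec z + g)) ^ 2 ∧
      (1 - β * η) * (z ⬝ᵥ (H.mulVec z + g)) -
          η * (1 - η * β) * (_root_.enorm (H.mulVec z + g)) ^ 2 ≤ 0 :=
  one_step_descent_inequality_general H g β hβ η hη_pos hηβ z hz1 hz2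
end
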